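/- arXiv:2407.01036 — 4 statements merged into one kernel-verified Lean document; each statement's English description precedes it below -/
import Mathlib

section
/- Let f₀ be a probability density function on ℝ (with respect to Lebesgue measure) and let g be a probability measure on ℝ (the prior on ζ). Suppose that for g-almost every ζ, C(ζ)⁻¹ := ∫ e^{ζz} f₀(z) dz is finite and positive, and define the exponential family density f_ζ(z) := C(ζ) e^{ζz} f₀(z) and the marginal density f(z) := ∫ f_ζ(z) dg(ζ). Fix z, t ∈ ℝ with f₀(z) > 0, f(z) > 0, and f₀(z+t) > 0, and assume the relevant integrals are finite. Then the posterior expectation of e^{tζ} given z satisfies ∫ e^{tζ} · (f_ζ(z)/f(z)) dg(ζ) = (f(z+t)/f₀(z+t)) · (f₀(z)/f(z)) = e^{A(z+t) − A(z)}, where A(z) := ln(f(z)/f₀(z)). -/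
open MeasureTheory Real

/-- in the natural exponential family `f_ζ(z) = C(ζ) e^{ζz} f₀(z)` with
prior `g` on `ζ` and marginal `f(z) = ∫ f_ζ(z) dg(ζ)`, the posterior moment generating
function of `ζ` at `t` given `z` equals
`(f(z+t)/f₀(z+t)) · (f₀(z)/f(z)) = e^{A(z+t) − A(z)}` where `A(z) = ln(f(z)/f₀(z))`. -/
theorem posterior_mgf_exponential_family
    (f₀ : ℝ → ℝ) (g : Measure ℝ) [IsProbabilityMeasure g]
    (hf₀meas : Measurable f₀) (hf₀nonneg : ∀ z, 0 ≤ f₀ z)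
    (hf₀int : Integrable f₀) (hf₀prob : ∫ z, f₀ z = 1)
    (Cinv : ℝ → ℝ) (hCinv : ∀ ζ, Cinv ζ = ∫ z, Real.exp (ζ * z) * f₀ z)
    (hCpos : ∀ᵐ ζ ∂g, 0 < Cinv ζ ∧ Integrable (fun z => Real.exp (ζ * z) * f₀ z))
    (fζ : ℝ → ℝ → ℝ) (hfζ : ∀ ζ z, fζ ζ z = (Cinv ζ)⁻¹ * Real.exp (ζ * z) * f₀ z)
    (f : ℝ → ℝ) (hf : ∀ z, f z = ∫ ζ, fζ ζ z ∂g)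
    (A : ℝ → ℝ) (hA : ∀ z, A z = Real.log (f z / f₀ z))
    (z t : ℝ)
    (hf₀z : 0 < f₀ z) (hfz : 0 < f z) (hf₀zt : 0 < f₀ (z + t))
    (hint₁ : Integrable (fun ζ => Real.exp (t * ζ) * (fζ ζ z)) g)
    (hint₂ : Integrable (fun ζ => fζ ζ (z + t)) g) :
    ∫ ζ, Real.exp (t * ζ) * (fζ ζ z / f z) ∂g
        = (f (z + t) / f₀ (z + t)) * (f₀ z / f z) ∧
      (f (z + t) / f₀ (z + t)) * (f₀ z / f z) = Real.exp (A (z + t) - A z) := by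
  -- pointwise identity
  have key : ∀ ζ, Real.exp (t * ζ) * fζ ζ z = fζ ζ (z + t) * (f₀ z / f₀ (z + t)) := by
    intro ζ
    rw [hfζ, hfζ]
    rw [show ζ * (z + t) = t * ζ + ζ * z by ring, Real.exp_add]
    field_simp
  -- f (z+t) > 0
  have hposae : ∀ᵐ ζ ∂g, 0 < fζ ζ (z + t) := by
    filter_upwards [hCpos] with ζ ⟨hC, _⟩
    rw [hfζ]
    positivity
  have hfzt : 0 < f (z + t) := by
    rw [hf]
    apply (integral_pos_iff_support_of_nonneg_ae _ hint₂).2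
    · have hmem : (Function.support fun ζ => fζ ζ (z + t)) ∈ ae g := by
        filter_upwards [hposae] with ζ h using h.ne'
      have hc : g (Function.support fun ζ => fζ ζ (z + t))ᶜ = 0 :=
        mem_ae_iff.mp hmem
      have h1 : (1 : ENNReal) ≤ g (Function.support fun ζ => fζ ζ (z + t)) := by
        have hu := measure_union_le (μ := g) (Function.support fun ζ => fζ ζ (z + t))
          (Function.support fun ζ => fζ ζ (z + t))ᶜ
        rw [Set.union_compl_self, measure_univ, hc, add_zero] at hu
        exact hu
      exact lt_of_lt_of_le one_pos h1
    · filter_upwards [hposae] with ζ h using h.le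
  have h1 : ∫ ζ, Real.exp (t * ζ) * (fζ ζ z / f z) ∂g
      = (f (z + t) / f₀ (z + t)) * (f₀ z / f z) := by
    have : ∀ ζ, Real.exp (t * ζ) * (fζ ζ z / f z)
        = (fζ ζ (z + t)) * (f₀ z / f₀ (z + t) / f z) := by
      intro ζ
      have := key ζ
      field_simp at this ⊢
      linear_combination this
    simp_rw [this]
    rw [integral_mul_const, ← hf]
    field_simp
  refine ⟨h1, ?_⟩
  rw [hA, hA, Real.exp_sub, Real.exp_log (by positivity), Real.exp_log (by positivity)]
  field_simp
end

section
/- Let f₀ be a probability density function on ℝ, g a probability measure on ℝ, C(ζ)⁻¹ := ∫ e^{ζz} f₀(z) dz assumed finite and positive for g-almost every ζ, f_ζ(z) := C(ζ) e^{ζz} f₀(z), and f(z) := ∫ f_ζ(z) dg(ζ). Fix π₀ ∈ (0,1] and define lfdr(z) := π₀ f₀(z)/f(z). Then for any z with f₀(z) > 0, f(z) > 0, f₀(z+1) > 0, f(z+1) > 0, and assuming the relevant integrals are finite, the posterior expectation of the lift ℓ := e^{ζ} − 1 given z satisfies ∫ (e^{ζ} − 1) · (f_ζ(z)/f(z)) dg(ζ)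 = lfdr(z)/lfdr(z+1) − 1. -/
open MeasureTheory Real

/-- in the natural exponential family model, the posterior expectation of
the lift `ℓ = e^ζ − 1` given `z` equals `lfdr(z)/lfdr(z+1) − 1`, where
`lfdr(z) = π₀ f₀(z)/f(z)` is the local false discovery rate function. -/
theorem posterior_expected_lift_eq_lfdr_ratio
    (f₀ : ℝ → ℝ) (g : Measure ℝ) [IsProbabilityMeasure g]
    (hf₀meas : Measurable f₀) (hf₀nonneg : ∀ z, 0 ≤ f₀ z)
    (hf₀int : Integrable f₀) (hf₀prob : ∫ z, f₀ z = 1)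
    (Cinv : ℝ → ℝ) (hCinv : ∀ ζ, Cinv ζ = ∫ z, Real.exp (ζ * z) * f₀ z)
    (hCpos : ∀ᵐ ζ ∂g, 0 < Cinv ζ ∧ Integrable (fun z => Real.exp (ζ * z) * f₀ z))
    (fζ : ℝ → ℝ → ℝ) (hfζ : ∀ ζ z, fζ ζ z = (Cinv ζ)⁻¹ * Real.exp (ζ * z) * f₀ z)
    (f : ℝ → ℝ) (hf : ∀ z, f z = ∫ ζ, fζ ζ z ∂g)
    (π₀ : ℝ) (hπ₀ : π₀ ∈ Set.Ioc (0 : ℝ) 1)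
    (lfdr : ℝ → ℝ) (hlfdr : ∀ y, lfdr y = π₀ * f₀ y / f y)
    (z : ℝ)
    (hf₀z : 0 < f₀ z) (hfz : 0 < f z) (hf₀z1 : 0 < f₀ (z + 1)) (hfz1 : 0 < f (z + 1))
    (hint₀ : Integrable (fun ζ => fζ ζ z) g)
    (hint₁ : Integrable (fun ζ => (Real.exp ζ - 1) * (fζ ζ z)) g)
    (hint₂ : Integrable (fun ζ => fζ ζ (z + 1)) g) :
    ∫ ζ, (Real.exp ζ - 1) * (fζ ζ z / f z) ∂g = lfdr z / lfdr (z + 1) - 1 := by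
  have key : ∀ ζ, Real.exp ζ * fζ ζ z = fζ ζ (z + 1) * (f₀ z / f₀ (z + 1)) := by
    intro ζ
    have hE : Real.exp (ζ * (z + 1)) = Real.exp (ζ * z) * Real.exp ζ := by
      rw [← Real.exp_add]; ring_nf
    apply mul_right_cancel₀ hf₀z1.ne'
    rw [mul_assoc (fζ ζ (z + 1)), div_mul_cancel₀ _ hf₀z1.ne', hfζ, hfζ, hE]
    ring
  have hexp : (fun ζ => Real.exp ζ * fζ ζ z) = fun ζ => fζ ζ (z + 1) * (f₀ z / f₀ (z + 1)) := by
    funext ζ; exact key ζ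
  have hsplit : ∀ ζ, (Real.exp ζ - 1) * fζ ζ z = Real.exp ζ * fζ ζ z - fζ ζ z := by
    intro ζ; ring
  have hI : ∫ ζ, (Real.exp ζ - 1) * fζ ζ z ∂g
      = f (z + 1) * (f₀ z / f₀ (z + 1)) - f z := by
    have hintE : Integrable (fun ζ => Real.exp ζ * fζ ζ z) g := by
      rw [hexp]; exact hint₂.mul_const _
    calc ∫ ζ, (Real.exp ζ - 1) * fζ ζ z ∂g
        = ∫ ζ, (Real.exp ζ * fζ ζ z - fζ ζ z) ∂g := by
          congr 1; funext ζ; exact hsplit ζ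
      _ = (∫ ζ, Real.exp ζ * fζ ζ z ∂g) - ∫ ζ, fζ ζ z ∂g :=
          integral_sub hintE hint₀
      _ = (∫ ζ, fζ ζ (z + 1) * (f₀ z / f₀ (z + 1)) ∂g) - f z := by rw [hexp, ← hf]
      _ = (∫ ζ, fζ ζ (z + 1) ∂g) * (f₀ z / f₀ (z + 1)) - f z := by
          rw [integral_mul_const]
      _ = f (z + 1) * (f₀ z / f₀ (z + 1)) - f z := by rw [← hf]
  have hL : ∫ ζ, (Real.exp ζ - 1) * (fζ ζ z / f z) ∂g
      = (∫ ζ, (Real.exp ζ - 1) * fζ ζ z ∂g) / f z := by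
    rw [← integral_div]
    congr 1; funext ζ; ring
  rw [hL, hI, hlfdr, hlfdr]
  have hπ := hπ₀.1
  field_simp
end

section
/- Let X be a random variable taking values almost surely in an interval [a, b] with 0 < a ≤ b, and let p := E[X], so a ≤ p ≤ b. Then |E[ln X] − ln p + Var(X)/(2p²)| ≤ E[|X−p|³] / (3a³). In particular, E[ln(X/p)] equals −(1/2)·Var(X/p) up to an error of at most E[|X−p|³]/(3a³), rather than the conventional zero. -/
open MeasureTheory ProbabilityTheory

lemma log_taylor2_bound {a p x : ℝ} (ha : 0 < a) (hp : a ≤ p) (hx : a ≤ x) :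
    |Real.log x - Real.log p - (x - p) / p + (x - p) ^ 2 / (2 * p ^ 2)|
      ≤ |x - p| ^ 3 / (3 * a ^ 3) := by
  have hp0 : (0:ℝ) < p := lt_of_lt_of_le ha hp
  set g : ℝ → ℝ := fun t => Real.log t - Real.log p - (t - p) / p + (t - p) ^ 2 / (2 * p ^ 2)
    with hg_def
  have hgderiv : ∀ t : ℝ, 0 < t → HasDerivAt g ((t - p) ^ 2 / (t * p ^ 2)) t := by
    intro t ht
    have h1 : HasDerivAt (fun t : ℝ => Real.log t) t⁻¹ t := Real.hasDerivAt_log ht.ne'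
    have h2 : HasDerivAt (fun t : ℝ => t - p) 1 t := (hasDerivAt_id t).sub_const p
    have h3 : HasDerivAt (fun t : ℝ => (t - p) / p) (1 / p) t := h2.div_const p
    have h4 : HasDerivAt (fun t : ℝ => (t - p) ^ 2) (2 * (t - p) ^ 1 * 1) t := h2.pow 2
    have h5 : HasDerivAt (fun t : ℝ => (t - p) ^ 2 / (2 * p ^ 2))
        ((2 * (t - p) ^ 1 * 1) / (2 * p ^ 2)) t := h4.div_const _
    have := ((h1.sub_const (Real.log p)).sub h3).add h5
    refine this.congr_deriv ?_
    field_simp [ht.ne', hp0.ne']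
    ring
  have hgp : g p = 0 := by simp [hg_def]
  rcases le_total p x with hpx | hpx
  · -- p ≤ x
    have hftc : ∫ t in p..x, (t - p) ^ 2 / (t * p ^ 2) = g x - g p := by
      apply intervalIntegral.integral_eq_sub_of_hasDerivAt
      · intro t ht
        rw [Set.uIcc_of_le hpx] at ht
        exact hgderiv t (lt_of_lt_of_le hp0 ht.1)
      · apply ContinuousOn.intervalIntegrable
        apply ContinuousOn.div
        · fun_prop
        · fun_prop
        · intro t ht
          rw [Set.uIcc_of_le hpx] at ht
          have : 0 < t := lt_of_lt_of_le hp0 ht.1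
          positivity
    have hint1 : IntervalIntegrable (fun t => (t - p) ^ 2 / (t * p ^ 2)) volume p x := by
      apply ContinuousOn.intervalIntegrable
      apply ContinuousOn.div
      · fun_prop
      · fun_prop
      · intro t ht
        rw [Set.uIcc_of_le hpx] at ht
        have : 0 < t := lt_of_lt_of_le hp0 ht.1
        positivity
    have hint2 : IntervalIntegrable (fun t => (t - p) ^ 2 / a ^ 3) volume p x := by
      apply ContinuousOn.intervalIntegrable; fun_prop
    have hnn : 0 ≤ g x := by
      have h0 : 0 ≤ ∫ t in p..x, (t - p) ^ 2 / (t * p ^ 2) := by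
        apply intervalIntegral.integral_nonneg hpx
        intro t ht
        have h1 : 0 < t := lt_of_lt_of_le hp0 ht.1
        positivity
      rw [hftc, hgp, sub_zero] at h0
      exact h0
    have hub : g x ≤ (x - p) ^ 3 / (3 * a ^ 3) := by
      have hmono : ∫ t in p..x, (t - p) ^ 2 / (t * p ^ 2)
          ≤ ∫ t in p..x, (t - p) ^ 2 / a ^ 3 := by
        apply intervalIntegral.integral_mono_on hpx hint1 hint2
        intro t ht
        have hta : a ≤ t := le_trans hp ht.1
        have ht0 : 0 < t := lt_of_lt_of_le ha hta
        apply div_le_div_of_nonneg_left (by positivity) (by positivity)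
        calc a ^ 3 = a * a ^ 2 := by ring
          _ ≤ t * p ^ 2 := by
              apply mul_le_mul hta (pow_le_pow_left₀ ha.le hp 2) (by positivity) ht0.le
      have hcomp : ∫ t in p..x, (t - p) ^ 2 / a ^ 3 = (x - p) ^ 3 / (3 * a ^ 3) := by
        rw [intervalIntegral.integral_div]
        rw [show (fun t : ℝ => (t - p) ^ 2) = fun t => (t - p) ^ 2 from rfl]
        rw [intervalIntegral.integral_comp_sub_right (fun t => t ^ 2) p]
        rw [integral_pow]
        ring_nf
      calc g x = g x - g p := by rw [hgp]; ring
        _ = ∫ t in p..x, (t - p) ^ 2 / (t * p ^ 2) := hftc.symm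
        _ ≤ ∫ t in p..x, (t - p) ^ 2 / a ^ 3 := hmono
        _ = (x - p) ^ 3 / (3 * a ^ 3) := hcomp
    rw [abs_of_nonneg hnn, abs_of_nonneg (by linarith : (0:ℝ) ≤ x - p)]
    exact hub
  · -- x ≤ p
    have hftc : ∫ t in x..p, (t - p) ^ 2 / (t * p ^ 2) = g p - g x := by
      apply intervalIntegral.integral_eq_sub_of_hasDerivAt
      · intro t ht
        rw [Set.uIcc_of_le hpx] at ht
        exact hgderiv t (lt_of_lt_of_le (lt_of_lt_of_le ha hx) ht.1)
      · apply ContinuousOn.intervalIntegrable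
        apply ContinuousOn.div
        · fun_prop
        · fun_prop
        · intro t ht
          rw [Set.uIcc_of_le hpx] at ht
          have : 0 < t := lt_of_lt_of_le (lt_of_lt_of_le ha hx) ht.1
          positivity
    have hint1 : IntervalIntegrable (fun t => (t - p) ^ 2 / (t * p ^ 2)) volume x p := by
      apply ContinuousOn.intervalIntegrable
      apply ContinuousOn.div
      · fun_prop
      · fun_prop
      · intro t ht
        rw [Set.uIcc_of_le hpx] at ht
        have : 0 < t := lt_of_lt_of_le (lt_of_lt_of_le ha hx) ht.1
        positivity
    have hint2 : IntervalIntegrable (fun t => (t - p) ^ 2 / a ^ 3) volume x p := by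
      apply ContinuousOn.intervalIntegrable; fun_prop
    have hnp : g x ≤ 0 := by
      have : 0 ≤ g p - g x := by
        rw [← hftc]
        apply intervalIntegral.integral_nonneg hpx
        intro t ht
        have h1 : 0 < t := lt_of_lt_of_le (lt_of_lt_of_le ha hx) ht.1
        positivity
      linarith [hgp]
    have hlb : -((p - x) ^ 3 / (3 * a ^ 3)) ≤ g x := by
      have hmono : ∫ t in x..p, (t - p) ^ 2 / (t * p ^ 2)
          ≤ ∫ t in x..p, (t - p) ^ 2 / a ^ 3 := by
        apply intervalIntegral.integral_mono_on hpx hint1 hint2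
        intro t ht
        have hta : a ≤ t := le_trans hx ht.1
        have ht0 : 0 < t := lt_of_lt_of_le ha hta
        apply div_le_div_of_nonneg_left (by positivity) (by positivity)
        calc a ^ 3 = a * a ^ 2 := by ring
          _ ≤ t * p ^ 2 := by
              apply mul_le_mul hta (pow_le_pow_left₀ ha.le hp 2) (by positivity) ht0.le
      have hcomp : ∫ t in x..p, (t - p) ^ 2 / a ^ 3 = -((x - p) ^ 3 / (3 * a ^ 3)) := by
        rw [intervalIntegral.integral_div]
        rw [intervalIntegral.integral_comp_sub_right (fun t => t ^ 2) p]
        rw [integral_pow]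
        ring_nf
      rw [hftc, hgp, hcomp] at hmono
      have heq : -((x - p) ^ 3 / (3 * a ^ 3)) = (p - x) ^ 3 / (3 * a ^ 3) := by ring
      rw [heq] at hmono
      linarith
    rw [abs_of_nonpos hnp, abs_of_nonpos (by linarith : x - p ≤ 0)]
    calc -g x ≤ (p - x) ^ 3 / (3 * a ^ 3) := by linarith
      _ = (-(x - p)) ^ 3 / (3 * a ^ 3) := by ring

/-- second-order mean correction: for a random variable `X` valued a.s.
in `[a, b]` with `0 < a ≤ b` and mean `p = E[X]`,
`|E[ln X] − ln p + Var(X)/(2p²)| ≤ E[|X−p|³]/(3a³)`; i.e. `E[ln(X/p)]` equals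
`−(1/2)·Var(X/p)` up to an error of at most `E[|X−p|³]/(3a³)`. -/
theorem expected_log_second_order_mean_correction
    {Ω : Type*} {F : MeasurableSpace Ω} (μ : Measure Ω) [IsProbabilityMeasure μ]
    (X : Ω → ℝ) (hXmeas : Measurable X)
    (a b : ℝ) (ha : 0 < a) (hab : a ≤ b)
    (hX : ∀ᵐ ω ∂μ, X ω ∈ Set.Icc a b)
    (p : ℝ) (hp : p = ∫ ω, X ω ∂μ) :
    |(∫ ω, Real.log (X ω) ∂μ) - Real.log p + variance X μ / (2 * p ^ 2)|
      ≤ (∫ ω, |X ω - p| ^ 3 ∂μ) / (3 * a ^ 3) := by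
  have hXmem : MemLp X 2 μ := memLp_of_bounded hX hXmeas.aestronglyMeasurable 2
  have hXint : Integrable X μ :=
    memLp_one_iff_integrable.mp (memLp_of_bounded hX hXmeas.aestronglyMeasurable 1)
  have hap : a ≤ p := by
    rw [hp]
    calc a = ∫ _ω, a ∂μ := by simp
      _ ≤ ∫ ω, X ω ∂μ := by
          apply integral_mono_ae (integrable_const a) hXint
          filter_upwards [hX] with ω hω using hω.1
  have hpb : p ≤ b := by
    rw [hp]
    calc (∫ ω, X ω ∂μ) ≤ ∫ _ω, b ∂μ := by
          apply integral_mono_ae hXint (integrable_const b)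
          filter_upwards [hX] with ω hω using hω.2
      _ = b := by simp
  have hp0 : 0 < p := lt_of_lt_of_le ha hap
  have habs : ∀ᵐ ω ∂μ, |X ω - p| ≤ b - a := by
    filter_upwards [hX] with ω hω
    rw [abs_le]
    exact ⟨by linarith [hω.1], by linarith [hω.2]⟩
  have hlogint : Integrable (fun ω => Real.log (X ω)) μ := by
    apply memLp_one_iff_integrable.mp
    apply memLp_of_bounded (a := Real.log a) (b := Real.log b) _
      ((Real.measurable_log.comp hXmeas).aestronglyMeasurable) 1
    filter_upwards [hX] with ω hω
    exact ⟨Real.log_le_log ha hω.1, Real.log_le_log (lt_of_lt_of_le ha hω.1) hω.2⟩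
  have hsubint : Integrable (fun ω => X ω - p) μ := hXint.sub (integrable_const p)
  have hsqint : Integrable (fun ω => (X ω - p) ^ 2) μ := by
    apply memLp_one_iff_integrable.mp
    apply memLp_of_bounded (a := 0) (b := (b - a) ^ 2) _
      (((hXmeas.sub measurable_const).pow_const 2).aestronglyMeasurable) 1
    filter_upwards [habs] with ω hω
    refine ⟨by positivity, ?_⟩
    calc (X ω - p) ^ 2 = |X ω - p| ^ 2 := (sq_abs _).symm
      _ ≤ (b - a) ^ 2 := pow_le_pow_left₀ (abs_nonneg _) hω 2
  have hcubint : Integrable (fun ω => |X ω - p| ^ 3) μ := by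
    apply memLp_one_iff_integrable.mp
    apply memLp_of_bounded (a := 0) (b := (b - a) ^ 3) _
      ((((hXmeas.sub measurable_const).abs).pow_const 3).aestronglyMeasurable) 1
    filter_upwards [habs] with ω hω
    exact ⟨by positivity, pow_le_pow_left₀ (abs_nonneg _) hω 3⟩
  set G : Ω → ℝ := fun ω =>
    Real.log (X ω) - Real.log p - (X ω - p) / p + (X ω - p) ^ 2 / (2 * p ^ 2) with hG_def
  have hGint : Integrable G μ :=
    ((hlogint.sub (integrable_const _)).sub (hsubint.div_const p)).add (hsqint.div_const _)
  have hg_ae : ∀ᵐ ω ∂μ, |G ω| ≤ |X ω - p| ^ 3 / (3 * a ^ 3) := by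
    filter_upwards [hX] with ω hω
    exact log_taylor2_bound ha hap hω.1
  have key : |∫ ω, G ω ∂μ| ≤ (∫ ω, |X ω - p| ^ 3 ∂μ) / (3 * a ^ 3) := by
    calc |∫ ω, G ω ∂μ| ≤ ∫ ω, |G ω| ∂μ := by
          simpa [Real.norm_eq_abs] using norm_integral_le_integral_norm (μ := μ) G
      _ ≤ ∫ ω, |X ω - p| ^ 3 / (3 * a ^ 3) ∂μ :=
          integral_mono_ae hGint.abs (hcubint.div_const _) hg_ae
      _ = (∫ ω, |X ω - p| ^ 3 ∂μ) / (3 * a ^ 3) := integral_div _ _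
  have hvar : variance X μ = ∫ ω, (X ω - p) ^ 2 ∂μ := by
    rw [variance_eq_integral hXmeas.aemeasurable]
    apply integral_congr_ae
    filter_upwards with ω
    simp [← hp]
  have hmean0 : ∫ ω, (X ω - p) ∂μ = 0 := by
    rw [integral_sub hXint (integrable_const p)]
    simp [← hp]
  have hEG : ∫ ω, G ω ∂μ =
      (∫ ω, Real.log (X ω) ∂μ) - Real.log p + variance X μ / (2 * p ^ 2) := by
    calc ∫ ω, G ω ∂μ
        = (∫ ω, (Real.log (X ω) - Real.log p - (X ω - p) / p) ∂μ)
            + ∫ ω, (X ω - p) ^ 2 / (2 * p ^ 2) ∂μ := by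
          rw [hG_def]
          exact integral_add
            (by exact (hlogint.sub (integrable_const _)).sub (hsubint.div_const p))
            (by exact hsqint.div_const _)
      _ = ((∫ ω, (Real.log (X ω) - Real.log p) ∂μ) - ∫ ω, (X ω - p) / p ∂μ)
            + (∫ ω, (X ω - p) ^ 2 ∂μ) / (2 * p ^ 2) := by
          rw [integral_sub (by exact hlogint.sub (integrable_const _))
            (by exact hsubint.div_const p), integral_div, integral_div]
      _ = (((∫ ω, Real.log (X ω) ∂μ) - Real.log p) - (∫ ω, (X ω - p) ∂μ) / p)
            + (∫ ω, (X ω - p) ^ 2 ∂μ) / (2 * p ^ 2) := by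
          rw [integral_sub hlogint (integrable_const _), integral_div]
          simp
      _ = (∫ ω, Real.log (X ω) ∂μ) - Real.log p + variance X μ / (2 * p ^ 2) := by
          rw [hmean0, hvar]; ring
  rw [← hEG]
  exact key
end

section
/- For every m ≥ 1, let (Ω, F, P) carry a sub-σ-algebra 𝒢_m ⊆ F, random variables θ₁⁽ᵐ⁾, …, θ_m⁽ᵐ⁾ : Ω → {0,1}, local false discovery rate statistics lfdrᵢ⁽ᵐ⁾ := E[1−θᵢ⁽ᵐ⁾ | 𝒢_m], 𝒢_m-measurable estimates l̂ᵢ⁽ᵐ⁾ taking values in [0,1], and a 𝒢_m-measurable random rejection set R_m ⊆ {1, …, m} with K_m := |R_m|. Assume the data-driven procedure guarantees almost surely that K_m ≥ 1 and Σ_{i ∈ R_m} l̂ᵢ⁽ᵐ⁾ ≤ α K_m. If (i) (1/m) Σ_{i=1}^m |l̂ᵢ⁽ᵐ⁾ − lfdrᵢ⁽ᵐ⁾| → 0 in probability as m → ∞, and (ii) there exists c > 0 with P(K_m ≥ c·m) → 1, then limsup_{m→∞} E[Σ_{i ∈ R_m} (1−θᵢ⁽ᵐ⁾)/K_m] ≤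 α. (Paper's Proposition 3: the data-driven procedure controls the FDR at the desired level asymptotically.) -/
open MeasureTheory Filter Finset

/-- Pull-out property at the level of integrals: for `𝒢`-measurable bounded `w`,
`∫ w·f = ∫ w·E[f|𝒢]`. -/
lemma pullout_integral_aux {Ω : Type*} {F : MeasurableSpace Ω} {μ : Measure Ω}
    [IsProbabilityMeasure μ] {𝒢 : MeasurableSpace Ω} (h : 𝒢 ≤ F) {w f : Ω → ℝ}
    (hw : StronglyMeasurable[𝒢] w) (hwf : Integrable (fun ω => w ω * f ω) μ)
    (hf : Integrable f μ) :
    ∫ ω, w ω * f ω ∂μ = ∫ ω, w ω * (μ[f|𝒢]) ω ∂μ := by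
  have h1 : μ[w * f|𝒢] =ᵐ[μ] w * μ[f|𝒢] :=
    condExp_mul_of_stronglyMeasurable_left hw hwf hf
  have h2 : ∫ ω, (μ[w * f|𝒢]) ω ∂μ = ∫ ω, (w * f) ω ∂μ := integral_condExp h
  calc ∫ ω, w ω * f ω ∂μ = ∫ ω, (μ[w * f|𝒢]) ω ∂μ := h2.symm
    _ = ∫ ω, (w * μ[f|𝒢]) ω ∂μ := integral_congr_ae h1
    _ = ∫ ω, w ω * (μ[f|𝒢]) ω ∂μ := rfl

/-- Paper's Proposition 3: if the data-driven procedure guarantees that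
the average of the estimated lfdr statistics over the (nonempty) rejected set is at most
`α`, the estimates are consistent in the averaged `L¹` sense in probability, and the
rejection rate is bounded away from zero in probability, then the data-driven procedure
controls the FDR at level `α` asymptotically. -/
theorem data_driven_procedure_asymptotic_FDR_control
    {Ω : Type*} {F : MeasurableSpace Ω} (μ : Measure Ω) [IsProbabilityMeasure μ]
    (𝒢 : ℕ → MeasurableSpace Ω) (h𝒢 : ∀ m, 𝒢 m ≤ F)
    (θ : (m : ℕ) → Fin m → Ω → ℝ)
    (hθmeas : ∀ m i, Measurable (θ m i))
    (hθ01 : ∀ m i ω, θ m i ω = 0 ∨ θ m i ω = 1)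
    (lhat : (m : ℕ) → Fin m → Ω → ℝ)
    (hlhatmeas : ∀ m i, Measurable[𝒢 m] (lhat m i))
    (hlhat01 : ∀ m i ω, lhat m i ω ∈ Set.Icc (0 : ℝ) 1)
    (R : (m : ℕ) → Ω → Finset (Fin m))
    (hRmeas : ∀ m, ∀ i : Fin m, MeasurableSet[𝒢 m] {ω | i ∈ R m ω})
    (α : ℝ) (hα : 0 < α)
    -- the data-driven procedure guarantees, almost surely, at least one rejection and
    -- average estimated lfdr over the rejected set at most α:
    (hproc : ∀ m, 1 ≤ m → ∀ᵐ ω ∂μ,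
      1 ≤ (R m ω).card ∧ ∑ i ∈ R m ω, lhat m i ω ≤ α * (R m ω).card)
    -- (i) averaged estimation error of the lfdr statistics vanishes in probability:
    (hconsist : TendstoInMeasure μ
      (fun m ω => (∑ i, |lhat m i ω - (μ[(fun ω' => 1 - θ m i ω') | 𝒢 m]) ω|) / m)
      atTop (fun _ => (0 : ℝ)))
    -- (ii) non-degenerate rejection rate:
    (hrate : ∃ c : ℝ, 0 < c ∧
      Tendsto (fun m => μ {ω | c * m ≤ ((R m ω).card : ℝ)}) atTop (nhds 1)) :
    limsup (fun m => ∫ ω, (∑ i ∈ R m ω, (1 - θ m i ω)) / ((R m ω).card : ℝ) ∂μ) atTop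
      ≤ α := by
  obtain ⟨c, hc, hrate⟩ := hrate
  set u : ℕ → ℝ :=
    fun m => ∫ ω, (∑ i ∈ R m ω, (1 - θ m i ω)) / ((R m ω).card : ℝ) ∂μ with hu_def
  have hθle : ∀ m i ω, 0 ≤ 1 - θ m i ω ∧ 1 - θ m i ω ≤ 1 := by
    intro m i ω; rcases hθ01 m i ω with h | h <;> simp [h]
  have hu_nonneg : ∀ m, 0 ≤ u m := by
    intro m
    refine integral_nonneg fun ω => ?_
    exact div_nonneg (Finset.sum_nonneg fun i _ => (hθle m i ω).1) (by positivity)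
  -- notation
  set K : (m : ℕ) → Ω → ℝ := fun m ω => ((R m ω).card : ℝ) with hK_def
  set lfdr : (m : ℕ) → Fin m → Ω → ℝ :=
    fun m i => μ[(fun ω' => 1 - θ m i ω') | 𝒢 m] with hlfdr_def
  set Er : ℕ → Ω → ℝ :=
    fun m ω => (∑ i, |lhat m i ω - (μ[(fun ω' => 1 - θ m i ω') | 𝒢 m]) ω|) / m with hE_def
  -- measurability of K and Er (w.r.t. F)
  have hKmeasG : ∀ m, Measurable[𝒢 m] (K m) := by
    intro m
    have : K m = fun ω => ∑ i : Fin m, if i ∈ R m ω then (1 : ℝ) else 0 := by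
      funext ω
      show ((R m ω).card : ℝ) = _
      rw [Finset.card_eq_sum_ones, Nat.cast_sum]
      rw [← Finset.univ_inter (R m ω), ← Finset.sum_ite_mem]
      exact Finset.sum_congr rfl fun i _ => by by_cases h : i ∈ R m ω <;> simp [h]
    rw [this]
    exact Finset.measurable_sum _ fun i _ =>
      Measurable.ite (hRmeas m i) measurable_const measurable_const
  have hKmeas : ∀ m, Measurable (K m) := fun m => (hKmeasG m).mono (h𝒢 m) le_rfl
  have hlfdrmeas : ∀ m i, Measurable (lfdr m i) := fun m i =>
    ((stronglyMeasurable_condExp.mono (h𝒢 m)).measurable)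
  have hErmeas : ∀ m, Measurable (Er m) := by
    intro m
    apply Measurable.div_const
    exact Finset.measurable_sum _ fun i _ =>
      (((hlhatmeas m i).mono (h𝒢 m) le_rfl).sub (hlfdrmeas m i)).abs
  -- main step: reduce to `∀ ε > 0, limsup u ≤ α + ε`
  refine le_of_forall_pos_le_add fun ε hε => ?_
  -- the good event
  set C1 : ℕ → Set Ω := fun m => {ω | c * m ≤ K m ω} with hC1_def
  set C2 : ℕ → Set Ω := fun m => {ω | ε * c ≤ dist (Er m ω) 0} with hC2_def
  set B : ℕ → Set Ω := fun m => C1 m ∩ (C2 m)ᶜ with hB_def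
  have hC1meas : ∀ m, MeasurableSet (C1 m) := fun m =>
    measurableSet_le measurable_const (hKmeas m)
  have hC2meas : ∀ m, MeasurableSet (C2 m) := fun m =>
    measurableSet_le measurable_const ((hErmeas m).dist measurable_const)
  have hBmeas : ∀ m, MeasurableSet (B m) := fun m => (hC1meas m).inter (hC2meas m).compl
  -- the key per-m bound
  have hbound : ∀ m : ℕ, 1 ≤ m → u m ≤ α + ε + (μ (B m)ᶜ).toReal := by
    intro m hm
    -- weights
    set w : Fin m → Ω → ℝ := fun i ω => if i ∈ R m ω then (K m ω)⁻¹ else 0 with hw_def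
    have hsum : ∀ (g : Fin m → Ω → ℝ) (ω : Ω),
        (∑ i ∈ R m ω, g i ω) / K m ω = ∑ i, w i ω * g i ω := by
      intro g ω
      have h1 : ∀ i : Fin m, w i ω * g i ω =
          if i ∈ R m ω then (K m ω)⁻¹ * g i ω else 0 := by
        intro i; by_cases h : i ∈ R m ω <;> simp [hw_def, h]
      calc (∑ i ∈ R m ω, g i ω) / K m ω = ∑ i ∈ R m ω, (K m ω)⁻¹ * g i ω := by
            rw [Finset.sum_div]; exact Finset.sum_congr rfl fun i _ => (inv_mul_eq_div _ _).symm
        _ = ∑ i ∈ Finset.univ ∩ R m ω, (K m ω)⁻¹ * g i ω := by rw [Finset.univ_inter]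
        _ = ∑ i, if i ∈ R m ω then (K m ω)⁻¹ * g i ω else 0 := (Finset.sum_ite_mem _ _ _).symm
        _ = ∑ i, w i ω * g i ω := Finset.sum_congr rfl fun i _ => (h1 i).symm
    have hwmeasG : ∀ i, Measurable[𝒢 m] (w i) := fun i =>
      Measurable.ite (hRmeas m i) (hKmeasG m).inv measurable_const
    have hwmeas : ∀ i, Measurable (w i) := fun i => (hwmeasG i).mono (h𝒢 m) le_rfl
    have hKnonneg : ∀ ω, 0 ≤ K m ω := fun ω => by positivity
    have hw01 : ∀ i ω, 0 ≤ w i ω ∧ w i ω ≤ 1 := by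
      intro i ω
      by_cases h : i ∈ R m ω
      · have h1 : (1 : ℝ) ≤ K m ω := by
          show (1 : ℝ) ≤ ((R m ω).card : ℝ)
          exact Nat.one_le_cast.mpr (Finset.card_pos.mpr ⟨i, h⟩)
        constructor
        · simp only [hw_def, if_pos h]
          positivity
        · simp only [hw_def, if_pos h]
          exact inv_le_one_of_one_le₀ h1
      · simp [hw_def, h]
    -- integrability of bounded measurable functions
    have hInt : ∀ (g : Ω → ℝ), Measurable g → (∀ ω, |g ω| ≤ 1) → Integrable g μ := by
      intro g hg hb
      exact ⟨hg.aestronglyMeasurable,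
        HasFiniteIntegral.of_bounded (C := 1) (ae_of_all μ fun ω => by
          simpa [Real.norm_eq_abs] using hb ω)⟩
    have hθint : ∀ i : Fin m, Integrable (fun ω => 1 - θ m i ω) μ := fun i =>
      hInt _ (measurable_const.sub (hθmeas m i)) fun ω => by
        rw [abs_le]; constructor <;> linarith [(hθle m i ω).1, (hθle m i ω).2]
    have hwθint : ∀ i : Fin m, Integrable (fun ω => w i ω * (1 - θ m i ω)) μ := fun i =>
      hInt _ ((hwmeas i).mul (measurable_const.sub (hθmeas m i))) fun ω => by
        rw [abs_mul]
        exact mul_le_one₀ (abs_le.mpr ⟨by linarith [(hw01 i ω).1], (hw01 i ω).2⟩)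
          (abs_nonneg _)
          (abs_le.mpr ⟨by linarith [(hθle m i ω).1], (hθle m i ω).2⟩)
    have hwlfdrint : ∀ i : Fin m, Integrable (fun ω => w i ω * lfdr m i ω) μ := fun i =>
      Integrable.bdd_mul (c := 1) integrable_condExp (hwmeas i).aestronglyMeasurable
        (ae_of_all μ fun ω => by
          rw [Real.norm_eq_abs]; exact abs_le.mpr ⟨by linarith [(hw01 i ω).1], (hw01 i ω).2⟩)
    -- Step 1: the FDR equals the expectation of the weighted lfdr sum
    have step1 : u m = ∫ ω, ∑ i, w i ω * lfdr m i ω ∂μ := by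
      rw [hu_def]
      calc ∫ ω, (∑ i ∈ R m ω, (1 - θ m i ω)) / ((R m ω).card : ℝ) ∂μ
          = ∫ ω, ∑ i, w i ω * (1 - θ m i ω) ∂μ := by
            refine integral_congr_ae (ae_of_all μ fun ω => ?_)
            exact hsum (fun i ω' => 1 - θ m i ω') ω
        _ = ∑ i, ∫ ω, w i ω * (1 - θ m i ω) ∂μ := integral_finset_sum _ fun i _ => hwθint i
        _ = ∑ i, ∫ ω, w i ω * lfdr m i ω ∂μ := by
            refine Finset.sum_congr rfl fun i _ => ?_
            exact pullout_integral_aux (h𝒢 m) (hwmeasG i).stronglyMeasurable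
              (hwθint i) (hθint i)
        _ = ∫ ω, ∑ i, w i ω * lfdr m i ω ∂μ :=
            (integral_finset_sum _ fun i _ => hwlfdrint i).symm
    -- a.e. bounds on the lfdr
    have hlfdr01 : ∀ᵐ ω ∂μ, ∀ i : Fin m, 0 ≤ lfdr m i ω ∧ lfdr m i ω ≤ 1 := by
      rw [ae_all_iff]
      intro i
      have h0 : 0 ≤ᵐ[μ] lfdr m i :=
        condExp_nonneg (ae_of_all μ fun ω => (hθle m i ω).1)
      have h1 : lfdr m i ≤ᵐ[μ] μ[(fun _ => (1 : ℝ)) | 𝒢 m] :=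
        condExp_mono (hθint i) (integrable_const 1) (ae_of_all μ fun ω => (hθle m i ω).2)
      have h2 : μ[(fun _ => (1 : ℝ)) | 𝒢 m] = fun _ => (1 : ℝ) :=
        condExp_const (μ := μ) (h𝒢 m) 1
      rw [h2] at h1
      filter_upwards [h0, h1] with ω hω0 hω1
      exact ⟨hω0, hω1⟩
    -- Step 2: pointwise a.e. bound on the weighted lfdr sum
    have step2 : ∀ᵐ ω ∂μ, (∑ i, w i ω * lfdr m i ω)
        ≤ (α + ε) + Set.indicator (B m)ᶜ (fun _ => (1 : ℝ)) ω := by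
      filter_upwards [hproc m hm, hlfdr01] with ω hpω hlω
      have hsumw_le : ∑ i, w i ω ≤ 1 := by
        have h1 : (∑ i ∈ R m ω, (1 : ℝ)) / K m ω = ∑ i, w i ω * 1 :=
          hsum (fun _ _ => 1) ω
        simp only [mul_one] at h1
        rw [← h1, Finset.sum_const, nsmul_eq_mul, mul_one]
        show K m ω / K m ω ≤ 1
        rcases eq_or_ne (K m ω) 0 with h | h
        · rw [h, div_zero]; norm_num
        · rw [div_self h]
      by_cases hB : ω ∈ B m
      · rw [Set.indicator_of_notMem (by simpa using hB), add_zero]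
        obtain ⟨hcard, hproc2⟩ := hpω
        have hKpos : 0 < K m ω := by
          show (0 : ℝ) < ((R m ω).card : ℝ)
          exact_mod_cast hcard
        obtain ⟨hC1ω, hC2ω⟩ := hB
        have hcm : c * m ≤ K m ω := hC1ω
        have hcmpos : 0 < c * m := by
          have : (1 : ℝ) ≤ (m : ℝ) := by exact_mod_cast hm
          nlinarith
        have hErlt : Er m ω < ε * c := by
          have : ¬ (ε * c ≤ dist (Er m ω) 0) := hC2ω
          push_neg at this
          calc Er m ω ≤ |Er m ω| := le_abs_self _
            _ = dist (Er m ω) 0 := by rw [Real.dist_eq, sub_zero]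
            _ < ε * c := this
        set S : ℝ := ∑ i, |lhat m i ω - lfdr m i ω| with hS_def
        have hS_nonneg : 0 ≤ S := Finset.sum_nonneg fun i _ => abs_nonneg _
        have hS_le : S ≤ ε * c * m := by
          have hmpos : (0 : ℝ) < m := by exact_mod_cast hm
          have : S / m < ε * c := hErlt
          nlinarith [(div_lt_iff₀ hmpos).mp this]
        calc ∑ i, w i ω * lfdr m i ω
            ≤ ∑ i, (w i ω * lhat m i ω + w i ω * |lhat m i ω - lfdr m i ω|) := by
              refine Finset.sum_le_sum fun i _ => ?_
              have h1 : lfdr m i ω ≤ lhat m i ω + |lhat m i ω - lfdr m i ω| := by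
                have := abs_nonneg (lhat m i ω - lfdr m i ω)
                have h2 := neg_abs_le (lhat m i ω - lfdr m i ω)
                linarith
              calc w i ω * lfdr m i ω
                  ≤ w i ω * (lhat m i ω + |lhat m i ω - lfdr m i ω|) :=
                    mul_le_mul_of_nonneg_left h1 (hw01 i ω).1
                _ = w i ω * lhat m i ω + w i ω * |lhat m i ω - lfdr m i ω| := mul_add _ _ _
          _ = (∑ i, w i ω * lhat m i ω) + ∑ i, w i ω * |lhat m i ω - lfdr m i ω| :=
              Finset.sum_add_distrib
          _ ≤ α + ε := by
              have hA : (∑ i, w i ω * lhat m i ω) ≤ α := by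
                rw [← hsum (fun i ω' => lhat m i ω') ω, div_le_iff₀ hKpos]
                exact hproc2
              have hB' : (∑ i, w i ω * |lhat m i ω - lfdr m i ω|) ≤ ε := by
                rw [← hsum (fun i ω' => |lhat m i ω' - lfdr m i ω'|) ω]
                have hsub : (∑ i ∈ R m ω, |lhat m i ω - lfdr m i ω|) ≤ S :=
                  Finset.sum_le_sum_of_subset_of_nonneg (Finset.subset_univ _)
                    fun i _ _ => abs_nonneg _
                calc (∑ i ∈ R m ω, |lhat m i ω - lfdr m i ω|) / K m ω
                    ≤ S / (c * m) := div_le_div₀ hS_nonneg hsub hcmpos hcm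
                  _ ≤ ε := by
                      rw [div_le_iff₀ hcmpos]
                      nlinarith
              linarith
      · rw [Set.indicator_of_mem (by simpa using hB)]
        have h1 : ∑ i, w i ω * lfdr m i ω ≤ ∑ i, w i ω :=
          Finset.sum_le_sum fun i _ =>
            mul_le_of_le_one_right (hw01 i ω).1 (hlω i).2
        have : (0:ℝ) < ε := hε
        linarith
    -- integrate the pointwise bound
    have hGint : Integrable (fun ω => ∑ i, w i ω * lfdr m i ω) μ :=
      integrable_finset_sum _ fun i _ => hwlfdrint i
    have hRHSint : Integrable
        (fun ω => (α + ε) + Set.indicator (B m)ᶜ (fun _ => (1 : ℝ)) ω) μ :=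
      (integrable_const _).add ((integrable_const 1).indicator (hBmeas m).compl)
    calc u m = ∫ ω, ∑ i, w i ω * lfdr m i ω ∂μ := step1
      _ ≤ ∫ ω, ((α + ε) + Set.indicator (B m)ᶜ (fun _ => (1 : ℝ)) ω) ∂μ :=
          integral_mono_ae hGint hRHSint step2
      _ = (α + ε) + (μ (B m)ᶜ).toReal := by
          rw [integral_add (integrable_const _)
            ((integrable_const 1).indicator (hBmeas m).compl)]
          rw [integral_const, integral_indicator_const _ (hBmeas m).compl]
          simp [measureReal_def]
  -- the probability of the bad event tends to zero
  have hC1c : Tendsto (fun m => μ (C1 m)ᶜ) atTop (nhds 0) := by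
    have h1 : ∀ m, μ (C1 m)ᶜ = 1 - μ (C1 m) := fun m => prob_compl_eq_one_sub (hC1meas m)
    simp only [h1]
    have h2 : Tendsto (fun m => (1 : ENNReal) - μ (C1 m)) atTop (nhds (1 - 1)) :=
      ((ENNReal.continuous_sub_left ENNReal.one_ne_top).tendsto 1).comp hrate
    simpa using h2
  have hC2t : Tendsto (fun m => μ (C2 m)) atTop (nhds 0) := by
    have := hconsist (ENNReal.ofReal (ε * c)) (ENNReal.ofReal_pos.mpr (mul_pos hε hc))
    have hset : ∀ m, C2 m = {ω | ENNReal.ofReal (ε * c) ≤ edist (Er m ω) 0} := fun m => by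
      ext ω
      simp only [hC2_def, Set.mem_setOf_eq, edist_dist, ENNReal.ofReal_le_ofReal_iff dist_nonneg]
    simp only [hset]
    exact this
  have hBc : Tendsto (fun m => μ (B m)ᶜ) atTop (nhds 0) := by
    have hsub : ∀ m, μ (B m)ᶜ ≤ μ (C1 m)ᶜ + μ (C2 m) := by
      intro m
      calc μ (B m)ᶜ ≤ μ ((C1 m)ᶜ ∪ C2 m) := by
            apply measure_mono
            rw [hB_def]
            intro ω hω
            simp only [Set.mem_compl_iff, Set.mem_inter_iff, not_and, Set.mem_union,
              Set.mem_compl_iff] at hω ⊢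
            by_cases h : ω ∈ C1 m
            · exact Or.inr (not_not.mp (hω h))
            · exact Or.inl h
        _ ≤ μ (C1 m)ᶜ + μ (C2 m) := measure_union_le _ _
    have hlim : Tendsto (fun m => μ (C1 m)ᶜ + μ (C2 m)) atTop (nhds 0) := by
      have := Tendsto.add hC1c hC2t
      simpa using this
    exact tendsto_of_tendsto_of_tendsto_of_le_of_le tendsto_const_nhds hlim
      (fun m => zero_le) hsub
  have hBcReal : Tendsto (fun m => (μ (B m)ᶜ).toReal) atTop (nhds 0) := by
    have := (ENNReal.tendsto_toReal (a := 0) (by simp)).comp hBc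
    simpa [Function.comp_def] using this
  have hv : Tendsto (fun m => α + ε + (μ (B m)ᶜ).toReal) atTop (nhds (α + ε)) := by
    have := Tendsto.add (tendsto_const_nhds (x := α + ε) (f := atTop)) hBcReal
    simpa using this
  have hle : limsup u atTop ≤ limsup (fun m => α + ε + (μ (B m)ᶜ).toReal) atTop := by
    refine limsup_le_limsup ?_ ?_ ?_
    · filter_upwards [eventually_ge_atTop 1] with m hm
      exact hbound m hm
    · exact isCoboundedUnder_le_of_le atTop hu_nonneg
    · exact hv.isBoundedUnder_le
  rw [hv.limsup_eq] at hle
  exact hle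
end
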